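/- Let ℓ, m, n be positive integers. Then 2^{mℓ + n(ℓ+m+n)} = 2^{n² + ℓ(m+n)} + Σ_{i=1}^{n} CT(ℓ,m,i) · ∏_{j=0}^{i−1}(2^n − 2^j) · 2^{(n+ℓ)(n−i)}, where CT(ℓ,m,i) denotes the number of canonical linear finite transducers over F_2 with structural parameters ℓ, m, i. (Equivalently, the total number of LFTs over F_2 with parameters ℓ, m, n is the number of trivial ones plus, for each i ≤ n, the number of LFTs of size n equivalent to each of the CT(ℓ,m,i) canonical LFTs of size i.) -/

import Mathlib

/-- Extension of the state transition function of a finite transducer to finite words. -/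
def deltaStar {X S : Type*} (δ : S → X → S) : S → List X → S
  | s, [] => s
  | s, a :: w => deltaStar δ (δ s a) w

/-- Extension of the output function of a finite transducer to finite words. -/
def lambdaStar {X Y S : Type*} (δ : S → X → S) (lam : S → X → Y) : S → List X → List Y
  | _, [] => []
  | s, a :: w => lam s a :: lambdaStar δ lam (δ s a) w

/-- A linear finite transducer over `F` with structural parameters `ℓ, m, n`, identified
with its quadruple of structural matrices `(A, B, C, D)`; its input alphabet is `F^ℓ`,
its output alphabet is `F^m` and its state space is `F^n`. -/
structure LFT (F : Type) [Field F] (ℓ m n : ℕ) where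
  A : Matrix (Fin n) (Fin n) F
  B : Matrix (Fin n) (Fin ℓ) F
  C : Matrix (Fin m) (Fin n) F
  D : Matrix (Fin m) (Fin ℓ) F

namespace LFT

variable {F : Type} [Field F] {ℓ m n n₁ n₂ : ℕ}

/-- The state transition function `δ(s, x) = As + Bx` of a linear finite transducer. -/
def del (M : LFT F ℓ m n) (s : Fin n → F) (x : Fin ℓ → F) : Fin n → F :=
  M.A.mulVec s + M.B.mulVec x

/-- The output function `λ(s, x) = Cs + Dx` of a linear finite transducer. -/
def out (M : LFT F ℓ m n) (s : Fin n → F) (x : Fin ℓ → F) : Fin m → F :=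
  M.C.mulVec s + M.D.mulVec x

/-- Two states are equivalent when the transducers produce the same output word from them
on every finite input word. -/
def StateEquiv (M₁ : LFT F ℓ m n₁) (M₂ : LFT F ℓ m n₂)
    (s₁ : Fin n₁ → F) (s₂ : Fin n₂ → F) : Prop :=
  ∀ α : List (Fin ℓ → F), lambdaStar M₁.del M₁.out s₁ α = lambdaStar M₂.del M₂.out s₂ α

/-- Two linear finite transducers are equivalent if every state of each one is equivalent
to some state of the other. -/
def Equiv (M₁ : LFT F ℓ m n₁) (M₂ : LFT F ℓ m n₂) : Prop :=
  (∀ s₁, ∃ s₂, StateEquiv M₁ M₂ s₁ s₂) ∧ (∀ s₂, ∃ s₁, StateEquiv M₁ M₂ s₁ s₂)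

/-- A linear finite transducer is minimal if it has no pair of distinct equivalent states. -/
def Minimal (M : LFT F ℓ m n) : Prop :=
  ∀ s s' : Fin n → F, StateEquiv M M s s' → s = s'

/-- The diagnostic matrix `Δ_M = [C; CA; …; CA^{n−1}]` of a linear finite transducer,
with the `mn` rows indexed by `Fin (n * m)` (row `i` is row `i % m` of `C * A ^ (i / m)`). -/
def diagMat (M : LFT F ℓ m n) : Matrix (Fin (n * m)) (Fin n) F :=
  Matrix.of fun i j =>
    (M.C * M.A ^ ((i : ℕ) / m))
      ⟨(i : ℕ) % m, Nat.mod_lt _ (Nat.pos_of_ne_zero fun h => by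
        have hpos : 0 < n * m := Nat.lt_of_le_of_lt (Nat.zero_le _) i.isLt
        rw [h, Nat.mul_zero] at hpos
        exact absurd hpos (lt_irrefl 0))⟩ j

end LFT

/-- A family of `k` vectors in `F^N` is in reduced row echelon form if there are strictly
increasing pivot positions where each vector has a leading `1` (with zeros in that
coordinate for the other vectors) and zeros before its pivot. -/
def IsRREF {F : Type} [Field F] {k N : ℕ} (b : Fin k → Fin N → F) : Prop :=
  ∃ p : Fin k → Fin N, StrictMono p ∧
    (∀ i i' : Fin k, b i' (p i) = if i' = i then 1 else 0) ∧
    ∀ (i : Fin k) (c : Fin N), (c : ℕ) < (p i : ℕ) → b i c = 0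

/-- A linear finite transducer of size `n` is canonical if the columns
`Δ_M e₁, …, Δ_M eₙ` of its diagnostic matrix form the standard basis (the reduced row
echelon form basis) of the column space `{Δ_M s ∣ s}` of `Δ_M`: they are linearly
independent (hence a basis of the column space, which they always span) and in RREF. -/
def LFT.IsCanonical {F : Type} [Field F] {ℓ m n : ℕ} (M : LFT F ℓ m n) : Prop :=
  LinearIndependent F (fun j : Fin n => fun r : Fin (n * m) => M.diagMat r j) ∧
    IsRREF (fun j : Fin n => fun r : Fin (n * m) => M.diagMat r j)

/-- The number of canonical linear finite transducers over `F₂` with structural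
parameters `ℓ, m, i`. -/
noncomputable def CT (ℓ m i : ℕ) : ℕ :=
  Nat.card {M : LFT (ZMod 2) ℓ m i // M.IsCanonical}

/-!
Sort the LFTs of size `n` by the rank `i` of their diagnostic matrix; rank `0` means `C = 0`.
An LFT `M` of rank `i` is the lift of exactly one pair `(M', T)`, with `M'` canonical of size `i`
and `T : F^n → F^i` surjective, along `C = C'T`, `TA = A'T`, `TB = B'`, `D = D'`.
The unobservable subspaces `N_k = ⋂_{j<k} ker (C A^j)` decrease strictly until they stabilise
and `N_n = ker Δ_M` has codimension `i`, so `N_i = N_{i+1} = ker Δ_M`. Hence the first `i` blocks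
of `Δ_M` factor as `Δ_{M'} T` with the columns of `Δ_{M'}` the reduced row echelon basis of their
column space, which gives `(M', T)`, uniquely since that basis is unique. Conversely, over a given
`(M', T)` the matrices `A`, `B` solving `TA = A'T`, `TB = B'` form an affine space of dimension
`(n + ℓ)(n - i)`, and there are `∏_{j<i} (2ⁿ - 2ʲ)` surjective `T`.
-/

open Matrix

section RREF

variable {F : Type} [Field F] {k N : ℕ}

structure IsRREFWith (p : Fin k → Fin N) (b : Fin k → Fin N → F) : Prop where
  strictMono : StrictMono p
  apply_pivot : ∀ i i', b i' (p i) = if i' = i then 1 else 0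
  apply_of_lt_pivot : ∀ i c, c < p i → b i c = 0

theorem isRREF_iff_exists_isRREFWith {b : Fin k → Fin N → F} :
    IsRREF b ↔ ∃ p, IsRREFWith p b :=
  ⟨fun ⟨p, h₁, h₂, h₃⟩ => ⟨p, h₁, h₂, h₃⟩, fun ⟨p, h₁, h₂, h₃⟩ => ⟨p, h₁, h₂, h₃⟩⟩

namespace IsRREFWith

variable {p : Fin k → Fin N} {b : Fin k → Fin N → F}

theorem sum_apply_pivot (h : IsRREFWith p b) (c : Fin k → F) (i : Fin k) :
    (∑ j, c j • b j) (p i) = c i := by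
  simp [Finset.sum_apply, h.apply_pivot]

theorem linearIndependent (h : IsRREFWith p b) : LinearIndependent F b :=
  Fintype.linearIndependent_iff.2 fun c hc i => by
    simpa [h.sum_apply_pivot] using congrFun hc (p i)

theorem eq_sum_of_mem_span (h : IsRREFWith p b) {v : Fin N → F}
    (hv : v ∈ Submodule.span F (Set.range b)) : v = ∑ j, v (p j) • b j := by
  obtain ⟨c, rfl⟩ := (Submodule.mem_span_range_iff_exists_fun F).1 hv
  simp [h.sum_apply_pivot]

/-- The leading coordinate of a nonzero combination of an RREF family is the pivot of the first
family member occurring in it. -/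
theorem pivot_mem_range (h : IsRREFWith p b) {q : Fin k → Fin N} {b' : Fin k → Fin N → F}
    (h' : IsRREFWith q b')
    (hspan : Submodule.span F (Set.range b') ≤ Submodule.span F (Set.range b)) (i : Fin k) :
    q i ∈ Set.range p := by
  have hv := h.eq_sum_of_mem_span (hspan (Submodule.subset_span ⟨i, rfl⟩))
  set v := b' i
  have hvq : v (q i) = 1 := by simp [v, h'.apply_pivot]
  have hS : {j | v (p j) ≠ 0}.Nonempty := by
    by_contra hS
    have hzero : ∀ j, v (p j) = 0 := fun j => by_contra fun hj => hS ⟨j, hj⟩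
    rw [hv, Finset.sum_apply] at hvq
    simp [hzero] at hvq
  obtain ⟨j₀, hj₀ : v (p j₀) ≠ 0, hmin⟩ := wellFounded_lt.has_min _ hS
  have hlt : ∀ c < p j₀, v c = 0 := by
    intro c hc
    rw [hv, Finset.sum_apply]
    refine Finset.sum_eq_zero fun j _ => ?_
    rcases lt_or_ge j j₀ with hj | hj
    · simp [not_not.1 fun hne => hmin j hne hj]
    · simp [h.apply_of_lt_pivot j c (hc.trans_le (h.strictMono.monotone hj))]
  refine ⟨j₀, le_antisymm (not_lt.1 fun hq => ?_) (not_lt.1 fun hq => ?_)⟩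
  · simp [hlt _ hq] at hvq
  · exact hj₀ (h'.apply_of_lt_pivot i _ hq)

theorem unique (h : IsRREFWith p b) {q : Fin k → Fin N} {b' : Fin k → Fin N → F}
    (h' : IsRREFWith q b')
    (hspan : Submodule.span F (Set.range b) = Submodule.span F (Set.range b')) : b = b' := by
  have hcard : (Finset.univ.image p).card = k := by
    simp [Finset.card_image_of_injective _ h.strictMono.injective]
  have hpq : p = q := by
    rw [Finset.orderEmbOfFin_unique hcard (fun i => by simp) h.strictMono,
      Finset.orderEmbOfFin_unique hcard (fun i => by simpa using h.pivot_mem_range h' hspan.ge i)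
        h'.strictMono]
  funext i
  rw [h.eq_sum_of_mem_span (v := b' i) (hspan ▸ Submodule.subset_span ⟨i, rfl⟩)]
  simp [hpq, h'.apply_pivot]

theorem cons (h : IsRREFWith p b) {c : Fin N} (hc : ∀ j, c < p j) {u : Fin N → F}
    (hu : u c = 1) (hu₀ : ∀ c' < c, u c' = 0) :
    IsRREFWith (Fin.cons c p : Fin (k + 1) → Fin N) (Fin.cons (u - ∑ j, u (p j) • b j) b) := by
  have hbc : ∀ j c', c' ≤ c → b j c' = 0 := fun j c' hc' =>
    h.apply_of_lt_pivot j c' (hc'.trans_lt (hc j))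
  refine ⟨Fin.strictMono_cons.2 ⟨hc, h.strictMono⟩, fun i i' => ?_, fun i c' hc' => ?_⟩
  · refine Fin.cases ?_ (fun i => ?_) i <;> refine Fin.cases ?_ (fun i' => ?_) i'
    · simp [Finset.sum_apply, hu, hbc _ c le_rfl]
    · simp [hbc _ c le_rfl, Fin.succ_ne_zero]
    · simp [h.sum_apply_pivot, (Fin.succ_ne_zero i).symm]
    · simp [h.apply_pivot]
  · refine Fin.cases (fun hc' => ?_) (fun i hc' => ?_) i hc'
    · rw [Fin.cons_zero] at hc'
      simp [Finset.sum_apply, hu₀ c' hc', hbc _ c' hc'.le]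
    · exact h.apply_of_lt_pivot i c' hc'

end IsRREFWith

section Hyperplane

variable {V : Submodule F (Fin N → F)} {c : Fin N} {x : Fin N → F}

theorem span_singleton_sup_inf_ker_proj (hxV : x ∈ V) (hx : x c = 1) :
    Submodule.span F {x} ⊔ (V ⊓ LinearMap.ker (LinearMap.proj c)) = V := by
  refine le_antisymm (sup_le (by simpa using hxV) inf_le_left) fun v hv => ?_
  have hrest : v - v c • x ∈ V ⊓ LinearMap.ker (LinearMap.proj c) :=
    ⟨V.sub_mem hv (V.smul_mem _ hxV), by simp [hx]⟩
  simpa using Submodule.add_mem_sup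
    (Submodule.smul_mem _ (v c) (Submodule.mem_span_singleton_self x)) hrest

theorem finrank_inf_ker_proj_add_one (hxV : x ∈ V) (hx : x c = 1) :
    Module.finrank F ↥(V ⊓ LinearMap.ker (LinearMap.proj c)) + 1 = Module.finrank F V := by
  have hdisj : Submodule.span F {x} ⊓ (V ⊓ LinearMap.ker (LinearMap.proj c)) = ⊥ := by
    refine (Submodule.eq_bot_iff _).2 fun y ⟨hy, _, hyc⟩ => ?_
    obtain ⟨a, rfl⟩ := Submodule.mem_span_singleton.1 hy
    simp_all
  have hx0 : x ≠ 0 := fun h0 => by simp [h0] at hx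
  have := Submodule.finrank_sup_add_finrank_inf_eq (Submodule.span F {x})
    (V ⊓ LinearMap.ker (LinearMap.proj c))
  rw [span_singleton_sup_inf_ker_proj hxV hx, hdisj, finrank_bot, finrank_span_singleton hx0]
    at this
  omega

end Hyperplane

/-- Induction on the dimension: the first pivot is the first coordinate on which `V` does not
vanish, and the rest of the basis is the RREF basis of the hyperplane of `V` cut out there. -/
theorem exists_isRREFWith_span_eq :
    ∀ {k : ℕ} (V : Submodule F (Fin N → F)), Module.finrank F V = k →
      ∃ (p : Fin k → Fin N) (b : Fin k → Fin N → F),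
        IsRREFWith p b ∧ Submodule.span F (Set.range b) = V
  | 0, V, hV => by
    refine ⟨Fin.elim0, Fin.elim0, ⟨fun i => i.elim0, fun i => i.elim0, fun i => i.elim0⟩, ?_⟩
    simp [(Submodule.finrank_eq_zero.1 hV).symm]
  | k + 1, V, hV => by
    have hVne : V ≠ ⊥ := fun h => by rw [Submodule.finrank_eq_zero.2 h] at hV; omega
    obtain ⟨v, hvV, hv0⟩ := Submodule.exists_mem_ne_zero_of_ne_bot hVne
    obtain ⟨c, ⟨w, hwV, hwc⟩, hmin⟩ := wellFounded_lt.has_min {c | ∃ w ∈ V, w c ≠ 0}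
      (by obtain ⟨c, hc⟩ := Function.ne_iff.1 hv0; exact ⟨c, v, hvV, hc⟩)
    have hzero : ∀ y ∈ V, ∀ c' < c, y c' = 0 := fun y hy c' hc' =>
      by_contra fun h => hmin c' ⟨y, hy, h⟩ hc'
    set u := (w c)⁻¹ • w
    have huV : u ∈ V := V.smul_mem _ hwV
    have hu : u c = 1 := by simp [u, hwc]
    set W := V ⊓ LinearMap.ker (LinearMap.proj c)
    obtain ⟨p, b, hb, hspan⟩ := exists_isRREFWith_span_eq (k := k) W
      (Nat.add_right_cancel ((finrank_inf_ker_proj_add_one huV hu).trans hV))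
    have hbW : ∀ j, b j ∈ W := fun j => hspan ▸ Submodule.subset_span ⟨j, rfl⟩
    have hc : ∀ j, c < p j := fun j => by
      have hbj : b j (p j) = 1 := by simpa using hb.apply_pivot j j
      refine lt_of_not_ge fun hle => ?_
      rcases hle.lt_or_eq with hlt | heq
      · simp [hzero _ (hbW j).1 _ hlt] at hbj
      · have hbc : b j c = 0 := (hbW j).2
        simp [heq, hbc] at hbj
    have hcons := hb.cons hc hu (hzero u huV)
    refine ⟨_, _, hcons, ?_⟩
    have hw'V : u - ∑ j, u (p j) • b j ∈ V :=
      V.sub_mem huV (V.sum_mem fun j _ => V.smul_mem _ (hbW j).1)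
    rw [Fin.range_cons, Submodule.span_insert, hspan]
    exact span_singleton_sup_inf_ker_proj hw'V (by simpa using hcons.apply_pivot 0 0)

end RREF

namespace Matrix

variable {K : Type*} [Field K] {l m n : Type*} [Fintype n]

theorem rank_eq_of_mulVec_eq_zero_iff {m' : Type*} {X : Matrix m n K} {Y : Matrix m' n K}
    (h : ∀ v, X *ᵥ v = 0 ↔ Y *ᵥ v = 0) : X.rank = Y.rank := by
  have hker : LinearMap.ker X.mulVecLin = LinearMap.ker Y.mulVecLin := by
    ext v
    exact h v
  have hX := LinearMap.finrank_range_add_finrank_ker X.mulVecLin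
  have hY := LinearMap.finrank_range_add_finrank_ker Y.mulVecLin
  rw [hker] at hX
  rw [rank, rank]
  omega

variable [Fintype m]

theorem eq_of_mul_eq_mul_of_linearIndependent_col {X : Matrix l m K}
    (hX : LinearIndependent K X.col) {Y Z : Matrix m n K} (h : X * Y = X * Z) : Y = Z :=
  ext_iff_mulVec.2 fun v => mulVec_injective_iff.2 hX (by simp [mulVec_mulVec, h])

variable [DecidableEq m]

theorem linearIndependent_row_iff_exists_mul_eq_one {T : Matrix m n K} :
    LinearIndependent K T.row ↔ ∃ R : Matrix n m K, T * R = 1 := by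
  refine ⟨fun hT => mulVec_surjective_iff_exists_right_inverse.1 ?_, fun ⟨R, hR⟩ => ?_⟩
  · have hrank : T.rank = Fintype.card m := by
      rw [rank_eq_finrank_span_row, finrank_span_eq_card hT]
    have hrange : LinearMap.range T.mulVecLin = ⊤ :=
      Submodule.eq_top_of_finrank_eq (by rw [Module.finrank_fintype_fun_eq_card]; exact hrank)
    exact LinearMap.range_eq_top.1 hrange
  · rw [← vecMul_injective_iff]
    intro g g' h
    simpa [vecMul_vecMul, hR] using congrArg (· ᵥ* R) h

theorem rank_eq_card_of_mul_eq_one {T : Matrix m n K} {R : Matrix n m K} (hR : T * R = 1) :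
    T.rank = Fintype.card m :=
  le_antisymm T.rank_le_card_height (by simpa [hR, rank_one] using rank_mul_le_left T R)

theorem eq_of_mul_eq_mul_of_mul_eq_one {X Y : Matrix l m K} {T : Matrix m n K}
    {R : Matrix n m K} (hR : T * R = 1) (h : X * T = Y * T) : X = Y := by
  simpa [Matrix.mul_assoc, hR] using congrArg (· * R) h

theorem range_mulVecLin_mul_of_mul_eq_one {X : Matrix l m K} {T : Matrix m n K}
    {R : Matrix n m K} (hR : T * R = 1) :
    LinearMap.range (X * T).mulVecLin = LinearMap.range X.mulVecLin := by
  rw [mulVecLin_mul, LinearMap.range_comp_of_range_eq_top]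
  exact LinearMap.range_eq_top.2 (mulVec_surjective_iff_exists_right_inverse.2 ⟨R, hR⟩)

theorem mul_mul_eq_of_mulVec_eq_zero {X : Matrix l n K} {T : Matrix m n K} {R : Matrix n m K}
    (hR : T * R = 1) (h : ∀ v, T *ᵥ v = 0 → X *ᵥ v = 0) : X * R * T = X := by
  refine ext_iff_mulVec.2 fun v => ?_
  have := h (R *ᵥ T *ᵥ v - v) (by
    rw [mulVec_sub, mulVec_mulVec, mulVec_mulVec, hR, Matrix.one_mul, sub_self])
  rwa [mulVec_sub, sub_eq_zero, mulVec_mulVec, mulVec_mulVec] at this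

end Matrix

theorem Matrix.exists_isRREFWith_mul_eq {F : Type} [Field F] {N k : ℕ} {ι : Type*} [Fintype ι]
    (A : Matrix (Fin N) ι F) (hk : A.rank = k) :
    ∃ (p : Fin k → Fin N) (b : Fin k → Fin N → F) (T : Matrix (Fin k) ι F),
      IsRREFWith p b ∧ (Matrix.of b)ᵀ * T = A ∧ ∃ R : Matrix ι (Fin k) F, T * R = 1 := by
  obtain ⟨p, b, hb, hspan⟩ := exists_isRREFWith_span_eq (LinearMap.range A.mulVecLin) hk
  have hmulVec : ∀ s, A.submatrix p id *ᵥ s = fun j => (A *ᵥ s) (p j) := fun _ => rfl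
  refine ⟨p, b, A.submatrix p id, hb, ext_iff_mulVec.2 fun s => ?_,
    mulVec_surjective_iff_exists_right_inverse.1 fun y => ?_⟩
  · rw [← mulVec_mulVec, mulVec_transpose, vecMul_eq_sum, hmulVec]
    exact (hb.eq_sum_of_mem_span (hspan ▸ LinearMap.mem_range_self _ s)).symm
  · obtain ⟨s, hs⟩ : ∑ j, y j • b j ∈ LinearMap.range A.mulVecLin :=
      hspan ▸ Submodule.sum_mem _ fun j _ => Submodule.smul_mem _ _ (Submodule.subset_span ⟨j, rfl⟩)
    refine ⟨s, funext fun j => ?_⟩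
    rw [hmulVec, ← mulVecLin_apply, hs]
    exact hb.sum_apply_pivot y j

section Stabilization

theorem eq_of_succ_eq_of_le {α : Type*} {N : ℕ → α}
    (hstep : ∀ j, N (j + 1) = N j → N (j + 1 + 1) = N (j + 1)) {j k : ℕ} (hj : N (j + 1) = N j)
    (hk : j ≤ k) : N k = N j := by
  have hsucc : ∀ k, j ≤ k → N (k + 1) = N k := fun k hk => by
    induction k, hk using Nat.le_induction with
    | base => exact hj
    | succ k _ ih => exact hstep k ih
  induction k, hk using Nat.le_induction with
  | base => rfl
  | succ k hjk ih => rw [hsucc k hjk, ih]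

open Module

variable {K V : Type*} [DivisionRing K] [AddCommGroup V] [Module K V] [FiniteDimensional K V]
  {N : ℕ → Submodule K V}

theorem Antitone.exists_succ_eq_or_add_finrank_le (hN : Antitone N) (k : ℕ) :
    (∃ j < k, N (j + 1) = N j) ∨ k + finrank K (N k) ≤ finrank K V := by
  induction k with
  | zero => exact Or.inr (by simpa using Submodule.finrank_le (N 0))
  | succ k ih =>
    rcases ih with ⟨j, hj, hstable⟩ | hle
    · exact Or.inl ⟨j, by omega, hstable⟩
    · by_cases hstable : N (k + 1) = N k
      · exact Or.inl ⟨k, by omega, hstable⟩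
      · have := Submodule.finrank_lt_finrank_of_lt
          (lt_of_le_of_ne (hN (Nat.le_add_right k 1)) hstable)
        omega

theorem Antitone.eq_of_sub_finrank_le (hN : Antitone N)
    (hstep : ∀ j, N (j + 1) = N j → N (j + 1 + 1) = N (j + 1)) {d k : ℕ} (hd : finrank K V ≤ d)
    (hk : d - finrank K (N d) ≤ k) : N k = N d := by
  rcases le_total d k with hdk | hkd
  · rcases hN.exists_succ_eq_or_add_finrank_le d with ⟨j, hj, hstable⟩ | hle
    · rw [eq_of_succ_eq_of_le hstep hstable (hj.le.trans hdk),
        eq_of_succ_eq_of_le hstep hstable hj.le]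
    · have hbot : N d = ⊥ := Submodule.finrank_eq_zero.1 (by omega)
      exact le_antisymm (hbot ▸ hN hdk) (hbot ▸ bot_le)
  · rcases hN.exists_succ_eq_or_add_finrank_le k with ⟨j, hj, hstable⟩ | hle
    · rw [eq_of_succ_eq_of_le hstep hstable hj.le,
        eq_of_succ_eq_of_le hstep hstable (hj.le.trans hkd)]
    · exact (Submodule.eq_of_le_of_finrank_le (hN hkd) (by omega)).symm

end Stabilization

attribute [ext] LFT

namespace LFT

section Observability

variable {F : Type} [Field F] {ℓ m n : ℕ} (M : LFT F ℓ m n)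

def diagMatUpTo (k : ℕ) : Matrix (Fin (k * m)) (Fin n) F :=
  Matrix.of fun r => (M.C * M.A ^ (r.divNat : ℕ)) r.modNat

theorem diagMat_eq_diagMatUpTo : M.diagMat = M.diagMatUpTo n := rfl

theorem diagMatUpTo_finProdFinEquiv (k : ℕ) (j : Fin k) (r : Fin m) :
    M.diagMatUpTo k (finProdFinEquiv (j, r)) = (M.C * M.A ^ (j : ℕ)) r := by
  change (M.C * M.A ^ ((finProdFinEquiv.symm (finProdFinEquiv (j, r))).1 : ℕ))
    (finProdFinEquiv.symm (finProdFinEquiv (j, r))).2 = _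
  rw [Equiv.symm_apply_apply]

theorem diagMatUpTo_mulVec_finProdFinEquiv (k : ℕ) (s : Fin n → F) (j : Fin k) (r : Fin m) :
    (M.diagMatUpTo k *ᵥ s) (finProdFinEquiv (j, r)) = ((M.C * M.A ^ (j : ℕ)) *ᵥ s) r := by
  simp only [mulVec, diagMatUpTo_finProdFinEquiv]

/-- The states from which the zero input produces zero output during the first `k` steps. -/
def unobservable (k : ℕ) : Submodule F (Fin n → F) :=
  ⨅ (j : ℕ) (_ : j < k), LinearMap.ker (M.C * M.A ^ j).mulVecLin

variable {M} in
theorem mem_unobservable {k : ℕ} {s : Fin n → F} :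
    s ∈ M.unobservable k ↔ ∀ j < k, (M.C * M.A ^ j) *ᵥ s = 0 := by
  simp [unobservable]

theorem diagMatUpTo_mulVec_eq_zero_iff {k : ℕ} {s : Fin n → F} :
    M.diagMatUpTo k *ᵥ s = 0 ↔ s ∈ M.unobservable k := by
  rw [funext_iff, ← finProdFinEquiv.forall_congr_right, Prod.forall, mem_unobservable]
  simp only [diagMatUpTo_mulVec_finProdFinEquiv, Pi.zero_apply]
  exact ⟨fun h j hj => funext (h ⟨j, hj⟩), fun h j r => congrFun (h j j.isLt) r⟩

theorem unobservable_antitone : Antitone M.unobservable := fun _ _ hjk _ hs =>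
  mem_unobservable.2 fun j hj => mem_unobservable.1 hs j (hj.trans_le hjk)

theorem unobservable_succ (k : ℕ) :
    M.unobservable (k + 1) =
      LinearMap.ker M.C.mulVecLin ⊓ (M.unobservable k).comap M.A.mulVecLin := by
  ext s
  rw [Submodule.mem_inf, LinearMap.mem_ker, Submodule.mem_comap, mem_unobservable,
    mem_unobservable, Nat.forall_lt_succ_left]
  simp [pow_succ, Matrix.mul_assoc, mulVec_mulVec]

theorem rank_diagMat_add_finrank_unobservable :
    M.diagMat.rank + Module.finrank F (M.unobservable n) = n := by
  have hker : LinearMap.ker M.diagMat.mulVecLin = M.unobservable n := by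
    ext s
    exact M.diagMatUpTo_mulVec_eq_zero_iff
  rw [rank, ← hker, LinearMap.finrank_range_add_finrank_ker, Module.finrank_fin_fun]

theorem unobservable_eq_of_rank_le {k : ℕ} (hk : M.diagMat.rank ≤ k) :
    M.unobservable k = M.unobservable n :=
  M.unobservable_antitone.eq_of_sub_finrank_le
    (fun j hj => by rw [unobservable_succ, hj, ← unobservable_succ]; exact hj)
    (Module.finrank_fin_fun F).le
    (by have := M.rank_diagMat_add_finrank_unobservable; omega)

theorem unobservable_rank_succ :
    M.unobservable (M.diagMat.rank + 1) = M.unobservable M.diagMat.rank := by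
  rw [M.unobservable_eq_of_rank_le (Nat.le_succ _), M.unobservable_eq_of_rank_le le_rfl]

theorem rank_diagMatUpTo_rank : (M.diagMatUpTo M.diagMat.rank).rank = M.diagMat.rank :=
  rank_eq_of_mulVec_eq_zero_iff fun v => by
    rw [diagMatUpTo_mulVec_eq_zero_iff, M.unobservable_eq_of_rank_le le_rfl,
      ← diagMatUpTo_mulVec_eq_zero_iff]
    rfl

theorem rank_diagMat_eq_zero_iff : M.diagMat.rank = 0 ↔ M.C = 0 := by
  have h := M.rank_diagMat_add_finrank_unobservable
  have htop : M.diagMat.rank = 0 ↔ M.unobservable n = ⊤ :=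
    ⟨fun h0 => Submodule.eq_top_of_finrank_eq (by rw [Module.finrank_fin_fun]; omega),
      fun htop => by rw [htop, finrank_top, Module.finrank_fin_fun] at h; omega⟩
  rw [htop]
  refine ⟨fun htop => ?_, fun hC => eq_top_iff.2 fun v _ => mem_unobservable.2 fun j _ => by
    simp [hC]⟩
  rcases Nat.eq_zero_or_pos n with rfl | hn
  · exact Matrix.ext fun _ j => j.elim0
  · exact ext_iff_mulVec.2 fun v => by
      simpa using mem_unobservable.1 (htop ▸ Submodule.mem_top (x := v)) 0 hn

end Observability

section Morphism

variable {F : Type} [Field F] {ℓ m n i : ℕ}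

/-- `s ↦ T s` is a homomorphism of transducers from `M` to `M'`. -/
structure IsMorphism (T : Matrix (Fin i) (Fin n) F) (M : LFT F ℓ m n) (M' : LFT F ℓ m i) :
    Prop where
  C_eq : M.C = M'.C * T
  mul_A : T * M.A = M'.A * T
  mul_B : T * M.B = M'.B
  D_eq : M.D = M'.D

namespace IsMorphism

variable {T : Matrix (Fin i) (Fin n) F} {M : LFT F ℓ m n} {M' : LFT F ℓ m i}

theorem C_mul_A_pow (h : IsMorphism T M M') (k : ℕ) :
    M.C * M.A ^ k = M'.C * M'.A ^ k * T := by
  induction k with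
  | zero => simp [h.C_eq]
  | succ k ih =>
    rw [pow_succ, ← Matrix.mul_assoc, ih, Matrix.mul_assoc, h.mul_A]
    simp only [pow_succ, Matrix.mul_assoc]

theorem diagMat_mul (h : IsMorphism T M M') : M'.diagMat * T = M.diagMatUpTo i := by
  ext x c
  obtain ⟨⟨j, r⟩, rfl⟩ := finProdFinEquiv.surjective x
  rw [diagMat_eq_diagMatUpTo, mul_apply, diagMatUpTo_finProdFinEquiv, ← mul_apply,
    ← h.C_mul_A_pow, diagMatUpTo_finProdFinEquiv]

theorem rank_diagMat (h : IsMorphism T M M') (hM' : M'.IsCanonical)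
    (hT : ∃ R : Matrix (Fin n) (Fin i) F, T * R = 1) : M.diagMat.rank = i := by
  obtain ⟨R, hR⟩ := hT
  have hin : i ≤ n := by simpa [rank_eq_card_of_mul_eq_one hR] using T.rank_le_card_width
  rw [← Fintype.card_fin i, ← rank_eq_card_of_mul_eq_one hR]
  refine rank_eq_of_mulVec_eq_zero_iff fun v => ?_
  rw [diagMat_eq_diagMatUpTo, diagMatUpTo_mulVec_eq_zero_iff, mem_unobservable]
  refine ⟨fun hv => (mulVec_injective_iff (M := M'.diagMat)).2 hM'.1 ?_, fun hv k _ => ?_⟩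
  · have hvi := M.diagMatUpTo_mulVec_eq_zero_iff.2
      (M.unobservable_antitone hin (mem_unobservable.2 hv))
    rw [← h.diagMat_mul, ← mulVec_mulVec] at hvi
    rw [hvi, mulVec_zero]
  · rw [h.C_mul_A_pow, ← mulVec_mulVec, hv, mulVec_zero]

theorem unique {T₁ T₂ : Matrix (Fin i) (Fin n) F} {M₁ M₂ : LFT F ℓ m i}
    (h₁ : IsMorphism T₁ M M₁) (h₂ : IsMorphism T₂ M M₂) (hc₁ : M₁.IsCanonical)
    (hc₂ : M₂.IsCanonical) (hT₁ : ∃ R : Matrix (Fin n) (Fin i) F, T₁ * R = 1)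
    (hT₂ : ∃ R : Matrix (Fin n) (Fin i) F, T₂ * R = 1) : M₁ = M₂ ∧ T₁ = T₂ := by
  have hspan : ∀ {M' : LFT F ℓ m i} {T : Matrix (Fin i) (Fin n) F}, IsMorphism T M M' →
      (∃ R : Matrix (Fin n) (Fin i) F, T * R = 1) →
      Submodule.span F (Set.range fun j r => M'.diagMat r j) =
        LinearMap.range (M.diagMatUpTo i).mulVecLin := fun h ⟨R, hR⟩ => by
    rw [← h.diagMat_mul, range_mulVecLin_mul_of_mul_eq_one hR, range_mulVecLin]
    rfl
  obtain ⟨p₁, hp₁⟩ := isRREF_iff_exists_isRREFWith.1 hc₁.2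
  obtain ⟨p₂, hp₂⟩ := isRREF_iff_exists_isRREFWith.1 hc₂.2
  have hdiag : M₁.diagMat = M₂.diagMat := by
    have := hp₁.unique hp₂ ((hspan h₁ hT₁).trans (hspan h₂ hT₂).symm)
    ext r j
    exact congrFun (congrFun this j) r
  obtain rfl : T₁ = T₂ := eq_of_mul_eq_mul_of_linearIndependent_col (X := M₁.diagMat) hc₁.1
    (by rw [h₁.diagMat_mul, hdiag, h₂.diagMat_mul])
  obtain ⟨R, hR⟩ := hT₁
  refine ⟨LFT.ext ?_ ?_ ?_ ?_, rfl⟩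
  · exact eq_of_mul_eq_mul_of_mul_eq_one hR (by rw [← h₁.mul_A, h₂.mul_A])
  · rw [← h₁.mul_B, h₂.mul_B]
  · exact eq_of_mul_eq_mul_of_mul_eq_one hR (by rw [← h₁.C_eq, h₂.C_eq])
  · rw [← h₁.D_eq, h₂.D_eq]

end IsMorphism

theorem exists_isMorphism_isCanonical (M : LFT F ℓ m n) :
    ∃ (M' : LFT F ℓ m M.diagMat.rank) (T : Matrix (Fin M.diagMat.rank) (Fin n) F),
      IsMorphism T M M' ∧ M'.IsCanonical ∧
        ∃ R : Matrix (Fin n) (Fin M.diagMat.rank) F, T * R = 1 := by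
  set i := M.diagMat.rank
  obtain ⟨p, b, T, hb, hψ, R, hR⟩ := (M.diagMatUpTo i).exists_isRREFWith_mul_eq
    M.rank_diagMatUpTo_rank
  have hkerT : ∀ v, T *ᵥ v = 0 ↔ v ∈ M.unobservable i := fun v => by
    rw [← diagMatUpTo_mulVec_eq_zero_iff, ← hψ, ← mulVec_mulVec]
    exact ⟨fun h => by rw [h, mulVec_zero],
      fun h => (mulVec_injective_iff (M := (Matrix.of b)ᵀ)).2 hb.linearIndependent
        (by rw [h, mulVec_zero])⟩
  have hstep : ∀ v ∈ M.unobservable i, M.C *ᵥ v = 0 ∧ M.A *ᵥ v ∈ M.unobservable i := by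
    intro v hv
    rw [← M.unobservable_rank_succ, unobservable_succ] at hv
    exact hv
  set M' : LFT F ℓ m i := ⟨T * M.A * R, T * M.B, M.C * R, M.D⟩
  have hmor : IsMorphism T M M' :=
    ⟨(mul_mul_eq_of_mulVec_eq_zero hR fun v hv => (hstep v ((hkerT v).1 hv)).1).symm,
      (mul_mul_eq_of_mulVec_eq_zero hR fun v hv => by
        rw [← mulVec_mulVec, hkerT]; exact (hstep v ((hkerT v).1 hv)).2).symm, rfl, rfl⟩
  have hcol : (fun j r => M'.diagMat r j) = b := by
    rw [eq_of_mul_eq_mul_of_mul_eq_one hR (hmor.diagMat_mul.trans hψ.symm)]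
    rfl
  refine ⟨M', T, hmor, ?_, R, hR⟩
  rw [IsCanonical, hcol, isRREF_iff_exists_isRREFWith]
  exact ⟨hb.linearIndependent, p, hb⟩

end Morphism

end LFT

section Counting

theorem LinearMap.natCard_fiber_of_surjective {K V W : Type*} [DivisionRing K] [AddCommGroup V]
    [Module K V] [FiniteDimensional K V] [AddCommGroup W] [Module K W] {f : V →ₗ[K] W}
    (hf : Function.Surjective f) (w : W) :
    Nat.card (f ⁻¹' {w}) = Nat.card K ^ (Module.finrank K V - Module.finrank K W) := by
  have hrank := f.finrank_range_add_finrank_ker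
  rw [LinearMap.range_eq_top.2 hf, finrank_top] at hrank
  calc Nat.card (f ⁻¹' {w}) = Nat.card (LinearMap.ker f) :=
        Nat.card_congr (f.toAddMonoidHom.fiberEquivKerOfSurjective hf w)
    _ = _ := by
        rw [Module.natCard_eq_pow_finrank (K := K)]
        congr 1
        omega

theorem natCard_eq_sum_range_natCard_fiber {α : Type*} [Finite α] (f : α → ℕ) {n : ℕ}
    (hf : ∀ a, f a ≤ n) : Nat.card α = ∑ i ∈ Finset.range (n + 1), Nat.card {a // f a = i} := by
  classical
  have := Fintype.ofFinite α
  rw [Nat.card_eq_fintype_card, ← Finset.card_univ,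
    Finset.card_eq_sum_card_fiberwise fun a _ => Finset.mem_range.2 (Nat.lt_succ_of_le (hf a))]
  simp [Nat.card_eq_fintype_card, Fintype.card_subtype]

variable {K : Type} [Field K] [Finite K]

theorem Matrix.natCard_fin (a b : ℕ) :
    Nat.card (Matrix (Fin a) (Fin b) K) = Nat.card K ^ (a * b) := by
  have := Fintype.ofFinite K
  rw [Module.natCard_eq_pow_finrank (K := K), Module.finrank_matrix]
  simp

theorem Matrix.natCard_mul_eq {l m n : Type*} [Fintype l] [Fintype m] [Fintype n] [DecidableEq l]
    {T : Matrix l m K} {R : Matrix m l K} (hR : T * R = 1) (Z : Matrix l n K) :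
    Nat.card {X : Matrix m n K // T * X = Z} =
      Nat.card K ^ ((Fintype.card m - Fintype.card l) * Fintype.card n) := by
  have := Fintype.ofFinite K
  have := LinearMap.natCard_fiber_of_surjective (f := mulLeftLinearMap n K T)
    (fun Z => ⟨R * Z, by simp [← Matrix.mul_assoc, hR]⟩) Z
  rw [Module.finrank_matrix, Module.finrank_matrix, Module.finrank_self, mul_one, mul_one,
    ← Nat.sub_mul] at this
  exact this

end Counting

namespace LFT

variable {K : Type} [Field K] {ℓ m n i : ℕ}

def equivProd : LFT K ℓ m n ≃ Matrix (Fin n) (Fin n) K × Matrix (Fin n) (Fin ℓ) K ×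
    Matrix (Fin m) (Fin n) K × Matrix (Fin m) (Fin ℓ) K where
  toFun M := (M.A, M.B, M.C, M.D)
  invFun x := ⟨x.1, x.2.1, x.2.2.1, x.2.2.2⟩

/-- A canonical LFT `M'` of size `i` with a surjective state map `T` onto it; every LFT of size
`n` and rank `i` lifts exactly one of these. -/
abbrev CanonicalQuotient (K : Type) [Field K] (ℓ m n i : ℕ) : Type :=
  {y : LFT K ℓ m i × Matrix (Fin i) (Fin n) K //
    y.1.IsCanonical ∧ ∃ R : Matrix (Fin n) (Fin i) K, y.2 * R = 1}

namespace CanonicalQuotient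

abbrev Lift (y : CanonicalQuotient K ℓ m n i) : Type :=
  {A : Matrix (Fin n) (Fin n) K // y.1.2 * A = y.1.1.A * y.1.2} ×
    {B : Matrix (Fin n) (Fin ℓ) K // y.1.2 * B = y.1.1.B}

def toLFT {y : CanonicalQuotient K ℓ m n i} (x : y.Lift) : LFT K ℓ m n :=
  ⟨x.1, x.2, y.1.1.C * y.1.2, y.1.1.D⟩

theorem isMorphism_toLFT {y : CanonicalQuotient K ℓ m n i} (x : y.Lift) :
    IsMorphism y.1.2 (toLFT x) y.1.1 :=
  ⟨rfl, x.1.2, x.2.2, rfl⟩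

theorem bijective_toLFT :
    Function.Bijective fun x : (Σ y : CanonicalQuotient K ℓ m n i, y.Lift) =>
      (⟨toLFT x.2, (isMorphism_toLFT x.2).rank_diagMat x.1.2.1 x.1.2.2⟩ :
        {M : LFT K ℓ m n // M.diagMat.rank = i}) := by
  refine ⟨?_, fun ⟨M, hM⟩ => ?_⟩
  · rintro ⟨y₁, ⟨A₁, hA₁⟩, ⟨B₁, hB₁⟩⟩ ⟨y₂, ⟨A₂, hA₂⟩, ⟨B₂, hB₂⟩⟩ heq
    have hM : toLFT (y := y₁) (⟨A₁, hA₁⟩, ⟨B₁, hB₁⟩) = toLFT (y := y₂) (⟨A₂, hA₂⟩, ⟨B₂, hB₂⟩) :=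
      congrArg Subtype.val heq
    have hmor₂ := isMorphism_toLFT (y := y₂) (⟨A₂, hA₂⟩, ⟨B₂, hB₂⟩)
    rw [← hM] at hmor₂
    obtain ⟨⟨M₁, T₁⟩, h₁⟩ := y₁
    obtain ⟨⟨M₂, T₂⟩, h₂⟩ := y₂
    obtain ⟨rfl, rfl⟩ := (isMorphism_toLFT _).unique hmor₂ h₁.1 h₂.1 h₁.2 h₂.2
    obtain rfl : A₁ = A₂ := congrArg LFT.A hM
    obtain rfl : B₁ = B₂ := congrArg LFT.B hM
    rfl
  · subst hM
    obtain ⟨M', T, hmor, hcan, hT⟩ := exists_isMorphism_isCanonical M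
    exact ⟨⟨⟨(M', T), hcan, hT⟩, ⟨M.A, hmor.mul_A⟩, ⟨M.B, hmor.mul_B⟩⟩,
      Subtype.ext (LFT.ext rfl rfl hmor.C_eq.symm hmor.D_eq.symm)⟩

variable [Finite K]

theorem natCard_lift (y : CanonicalQuotient K ℓ m n i) :
    Nat.card y.Lift = Nat.card K ^ ((n + ℓ) * (n - i)) := by
  obtain ⟨R, hR⟩ := y.2.2
  rw [Nat.card_prod, Matrix.natCard_mul_eq hR, Matrix.natCard_mul_eq hR, ← pow_add]
  simp only [Fintype.card_fin]
  ring_nf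

theorem natCard_eq (hi : i ≤ n) :
    Nat.card (CanonicalQuotient K ℓ m n i) = Nat.card {M' : LFT K ℓ m i // M'.IsCanonical} *
      ∏ j ∈ Finset.range i, (Nat.card K ^ n - Nat.card K ^ j) := by
  have := Fintype.ofFinite K
  rw [Nat.card_congr (Equiv.subtypeProdEquivProd (p := LFT.IsCanonical)
    (q := fun T : Matrix (Fin i) (Fin n) K => ∃ R : Matrix (Fin n) (Fin i) K, T * R = 1)),
    Nat.card_prod]
  congr 1
  simp_rw [← Matrix.linearIndependent_row_iff_exists_mul_eq_one]
  have hcard := card_linearIndependent (K := K) (V := Fin n → K) (k := i) (by simpa using hi)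
  rw [Module.finrank_fin_fun] at hcard
  rw [Nat.card_eq_fintype_card (α := K), ← Fin.prod_univ_eq_prod_range]
  exact hcard

end CanonicalQuotient

variable [Finite K]

instance : Finite (LFT K ℓ m n) := Finite.of_equiv _ equivProd.symm

theorem natCard : Nat.card (LFT K ℓ m n) = Nat.card K ^ (m * ℓ + n * (ℓ + m + n)) := by
  simp only [Nat.card_congr equivProd, Nat.card_prod, Matrix.natCard_fin, ← pow_add]
  ring_nf

theorem natCard_rank_diagMat_eq_zero :
    Nat.card {M : LFT K ℓ m n // M.diagMat.rank = 0} = Nat.card K ^ (n ^ 2 + ℓ * (m + n)) := by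
  let e : {M : LFT K ℓ m n // M.diagMat.rank = 0} ≃
      Matrix (Fin n) (Fin n) K × Matrix (Fin n) (Fin ℓ) K × Matrix (Fin m) (Fin ℓ) K :=
    { toFun M := (M.1.A, M.1.B, M.1.D)
      invFun x := ⟨⟨x.1, x.2.1, 0, x.2.2⟩, by simp [rank_diagMat_eq_zero_iff]⟩
      left_inv := fun ⟨M, hM⟩ => Subtype.ext <|
        LFT.ext rfl rfl (M.rank_diagMat_eq_zero_iff.1 hM).symm rfl
      right_inv _ := rfl }
  simp only [Nat.card_congr e, Nat.card_prod, Matrix.natCard_fin, ← pow_add]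
  ring_nf

theorem natCard_rank_diagMat_eq (hi : i ≤ n) :
    Nat.card {M : LFT K ℓ m n // M.diagMat.rank = i} =
      Nat.card {M' : LFT K ℓ m i // M'.IsCanonical} *
        ((∏ j ∈ Finset.range i, (Nat.card K ^ n - Nat.card K ^ j)) *
          Nat.card K ^ ((n + ℓ) * (n - i))) := by
  have := Fintype.ofFinite (CanonicalQuotient K ℓ m n i)
  rw [← Nat.card_congr (Equiv.ofBijective _ CanonicalQuotient.bijective_toLFT), Nat.card_sigma]
  simp only [CanonicalQuotient.natCard_lift, Finset.sum_const, Finset.card_univ, smul_eq_mul,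
    ← Nat.card_eq_fintype_card, CanonicalQuotient.natCard_eq hi, mul_assoc]

end LFT

theorem total_count_decomposition_general (ℓ m n : ℕ) :
    2 ^ (m * ℓ + n * (ℓ + m + n)) =
      2 ^ (n ^ 2 + ℓ * (m + n)) +
        ∑ i ∈ Finset.Icc 1 n,
          CT ℓ m i * ((∏ j ∈ Finset.range i, (2 ^ n - 2 ^ j)) * 2 ^ ((n + ℓ) * (n - i))) := by
  have h := natCard_eq_sum_range_natCard_fiber (α := LFT (ZMod 2) ℓ m n) (fun M => M.diagMat.rank)
    fun M => M.diagMat.rank_le_width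
  rw [Finset.range_eq_Ico, Finset.sum_eq_sum_Ico_succ_bot (Nat.add_one_pos n), zero_add,
    Finset.Ico_add_one_right_eq_Icc, LFT.natCard, LFT.natCard_rank_diagMat_eq_zero,
    Finset.sum_congr rfl fun i hi => LFT.natCard_rank_diagMat_eq (Finset.mem_Icc.1 hi).2,
    Nat.card_zmod] at h
  exact h

/-- the total number `2^{mℓ+n(ℓ+m+n)}` of LFTs over `F₂` with structural
parameters `ℓ, m, n` equals the number `2^{n²+ℓ(m+n)}` of trivial ones plus
`Σ_{i=1}^{n} CT(ℓ,m,i) · ∏_{j=0}^{i−1}(2ⁿ − 2^j) · 2^{(n+ℓ)(n−i)}`. -/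
theorem total_count_decomposition (ℓ m n : ℕ) (hℓ : 0 < ℓ) (hm : 0 < m) (hn : 0 < n) :
    2 ^ (m * ℓ + n * (ℓ + m + n)) =
      2 ^ (n ^ 2 + ℓ * (m + n)) +
        ∑ i ∈ Finset.Icc 1 n,
          CT ℓ m i * ((∏ j ∈ Finset.range i, (2 ^ n - 2 ^ j)) * 2 ^ ((n + ℓ) * (n - i))) :=
  total_count_decomposition_general ℓ m n
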